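/- Let ε < 1/3, P₀ = N(0, I_p), and define the depth region L(η, P₀) = {Γ ≻ 0 : D(Γ, P₀) ≥ 1/2 - η}. Then L(ε/(1-ε), P₀) = {Γ ≻ 0 : 1/2 + ε/(1-ε) ≥ g(v₁) ≥ g(v_p) ≥ 1/2 - ε/(1-ε)}, where g(v_j) = 2Φ(√l_j) - 1 and l₁, l_p are the largest and smallest eigenvalues of Γ with eigenvectors v₁, v_p. Consequently, for Γ ∈ L(ε/(1-ε), P₀), the operator norm of Γ is at most [Φ⁻¹((3-ε)/(4(1-ε)))]² and the operator norm of Γ⁻¹ is at most 1/[Φ⁻¹((3-5ε)/(4(1-ε)))]². -/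

import Mathlib

open MeasureTheory ProbabilityTheory

/-- The standard normal cumulative distribution function. -/
noncomputable def Phi (x : ℝ) : ℝ := ((gaussianReal 0 1) (Set.Iic x)).toReal

/-- The inverse of the standard normal CDF. -/
noncomputable def PhiInv : ℝ → ℝ := Function.invFun Phi

/-!
With `η = ε/(1-ε) < 1/2`, the two constants are `(3-ε)/(4(1-ε)) = 3/4 + η/2 < 1` and
`(3-5ε)/(4(1-ε)) = 3/4 - η/2 > 1/2`. Since `Φ` is strictly increasing, `Φ(√l_p) ≤ Φ(√l₁)`, so the
bound on the minimum is exactly the pair `Φ(√l_p) ≥ 3/4 - η/2`, `Φ(√l₁) ≤ 3/4 + η/2`. As `Φ` is a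
continuous strictly increasing bijection onto `(0,1)`, these invert to `√l₁ ≤ Φ⁻¹(3/4 + η/2)` and
`0 < Φ⁻¹(3/4 - η/2) ≤ √l_p`, which square to the eigenvalue bounds.
-/

open Set

lemma Phi_eq_cdf : Phi = cdf (gaussianReal 0 1) :=
  funext fun x => (cdf_eq_real _ x).symm

lemma Phi_eq_integral (x : ℝ) : Phi x = ∫ t in Iic x, gaussianPDFReal 0 1 t := by
  rw [Phi, gaussianReal_apply_eq_integral 0 one_ne_zero, ENNReal.toReal_ofReal]
  exact setIntegral_nonneg measurableSet_Iic fun t _ => gaussianPDFReal_nonneg 0 1 t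

lemma Phi_sub_Phi (a b : ℝ) : Phi b - Phi a = ∫ t in a..b, gaussianPDFReal 0 1 t := by
  rw [Phi_eq_integral, Phi_eq_integral, intervalIntegral.integral_Iic_sub_Iic
    (integrable_gaussianPDFReal 0 1).integrableOn (integrable_gaussianPDFReal 0 1).integrableOn]

lemma Phi_strictMono : StrictMono Phi := fun a b hab => by
  rw [← sub_pos, Phi_sub_Phi]
  exact intervalIntegral.intervalIntegral_pos_of_pos_on
    (integrable_gaussianPDFReal 0 1).intervalIntegrable
    (fun t _ => gaussianPDFReal_pos 0 1 t one_ne_zero) hab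

lemma continuous_Phi : Continuous Phi := by
  have h : Phi = fun x => Phi 0 + ∫ t in (0 : ℝ)..x, gaussianPDFReal 0 1 t :=
    funext fun x => by rw [← Phi_sub_Phi]; ring
  rw [h]
  exact continuous_const.add ((integrable_gaussianPDFReal 0 1).continuous_primitive 0)

lemma Phi_zero : Phi 0 = 1 / 2 := by
  -- the density is even, so it has the same mass on both half-lines
  have h_halves : ∫ t in Iic (0 : ℝ), gaussianPDFReal 0 1 t
      = ∫ t in Ioi (0 : ℝ), gaussianPDFReal 0 1 t := by
    simpa [gaussianPDFReal, neg_sq] using integral_comp_neg_Iic 0 (gaussianPDFReal 0 1)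
  have h_total : (∫ t in Iic (0 : ℝ), gaussianPDFReal 0 1 t)
      + ∫ t in Ioi (0 : ℝ), gaussianPDFReal 0 1 t = 1 := by
    rw [← setIntegral_union (Iic_disjoint_Ioi le_rfl) measurableSet_Ioi
      (integrable_gaussianPDFReal 0 1).integrableOn (integrable_gaussianPDFReal 0 1).integrableOn,
      Iic_union_Ioi, setIntegral_univ, integral_gaussianPDFReal_eq_one 0 one_ne_zero]
  rw [Phi_eq_integral]
  linarith

lemma Phi_lt_one (x : ℝ) : Phi x < 1 :=
  (Phi_strictMono (lt_add_one x)).trans_le (Phi_eq_cdf ▸ cdf_le_one _ _)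

lemma exists_Phi_eq {q : ℝ} (hq0 : 0 < q) (hq1 : q < 1) : ∃ x, Phi x = q := by
  rw [Phi_eq_cdf]
  exact mem_range_of_exists_le_of_exists_ge (Phi_eq_cdf ▸ continuous_Phi)
    ((tendsto_cdf_atBot _).eventually (eventually_le_nhds hq0)).exists
    ((tendsto_cdf_atTop _).eventually (eventually_ge_nhds hq1)).exists

lemma Phi_PhiInv {q : ℝ} (hq0 : 0 < q) (hq1 : q < 1) : Phi (PhiInv q) = q :=
  Function.invFun_eq (exists_Phi_eq hq0 hq1)

lemma le_PhiInv_iff {x q : ℝ} (hq0 : 0 < q) (hq1 : q < 1) : x ≤ PhiInv q ↔ Phi x ≤ q := by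
  conv_rhs => rw [← Phi_PhiInv hq0 hq1]
  exact Phi_strictMono.le_iff_le.symm

lemma PhiInv_le_iff {x q : ℝ} (hq0 : 0 < q) (hq1 : q < 1) : PhiInv q ≤ x ↔ q ≤ Phi x := by
  conv_rhs => rw [← Phi_PhiInv hq0 hq1]
  exact Phi_strictMono.le_iff_le.symm

lemma PhiInv_pos {q : ℝ} (hq : 1 / 2 < q) (hq1 : q < 1) : 0 < PhiInv q := by
  rw [← not_le, PhiInv_le_iff (by linarith) hq1, Phi_zero, not_le]
  exact hq

lemma le_sq_PhiInv_of_Phi_sqrt_le {l q : ℝ} (hq : q < 1) (h : Phi √l ≤ q) :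
    l ≤ PhiInv q ^ 2 := by
  have hq0 : 0 < q := by
    linarith [Phi_zero ▸ Phi_strictMono.monotone (Real.sqrt_nonneg l)]
  exact (Real.sqrt_le_iff.mp ((le_PhiInv_iff hq0 hq).mpr h)).2

lemma sq_PhiInv_le_of_le_Phi_sqrt {l q : ℝ} (hq : 1 / 2 < q) (h : q ≤ Phi √l) :
    PhiInv q ^ 2 ≤ l := by
  have hq1 : q < 1 := h.trans_lt (Phi_lt_one _)
  exact (Real.le_sqrt' (PhiInv_pos hq hq1)).mp ((PhiInv_le_iff (by linarith) hq1).mpr h)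

theorem depth_region_characterization_general (ε l₁ lp : ℝ)
    (hε : ε < 1 / 3) (hle : lp ≤ l₁) :
    ((min (2 * Phi (Real.sqrt lp) - 1) (2 * (1 - Phi (Real.sqrt l₁))) ≥
        1 / 2 - ε / (1 - ε)) ↔
      (1 / 2 + ε / (1 - ε) ≥ 2 * Phi (Real.sqrt l₁) - 1 ∧
        2 * Phi (Real.sqrt l₁) - 1 ≥ 2 * Phi (Real.sqrt lp) - 1 ∧
        2 * Phi (Real.sqrt lp) - 1 ≥ 1 / 2 - ε / (1 - ε))) ∧
    ((min (2 * Phi (Real.sqrt lp) - 1) (2 * (1 - Phi (Real.sqrt l₁))) ≥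
        1 / 2 - ε / (1 - ε)) →
      l₁ ≤ (PhiInv ((3 - ε) / (4 * (1 - ε)))) ^ 2 ∧
        (PhiInv ((3 - 5 * ε) / (4 * (1 - ε)))) ^ 2 ≤ lp) := by
  have h1ε : 0 < 1 - ε := by linarith
  set η := ε / (1 - ε) with hη
  have hη_lt : η < 1 / 2 := by rw [hη, div_lt_iff₀ h1ε]; linarith
  have hq₁ : (3 - ε) / (4 * (1 - ε)) = 3 / 4 + η / 2 := by rw [hη]; field_simp; ring
  have hq₂ : (3 - 5 * ε) / (4 * (1 - ε)) = 3 / 4 - η / 2 := by rw [hη]; field_simp; ring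
  have h_mono : Phi √lp ≤ Phi √l₁ := Phi_strictMono.monotone (Real.sqrt_le_sqrt hle)
  simp only [ge_iff_le, le_min_iff, hq₁, hq₂]
  refine ⟨⟨fun ⟨h₁, h₂⟩ => ⟨by linarith, by linarith, h₁⟩, fun ⟨h₁, _, h₃⟩ => ⟨h₃, by linarith⟩⟩,
    fun ⟨h₁, h₂⟩ => ⟨?_, ?_⟩⟩
  · exact le_sq_PhiInv_of_Phi_sqrt_le (by linarith) (by linarith)
  · exact sq_PhiInv_le_of_le_Phi_sqrt (by linarith) (by linarith)

/-- For `ε < 1/3`, a positive definite matrix with extreme eigenvalues `l₁ ≥ l_p > 0` lies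
in the depth region `L(ε/(1-ε), P₀) = {Γ : D(Γ,P₀) ≥ 1/2 - ε/(1-ε)}` (where
`D(Γ,P₀) = min{2Φ(√l_p)-1, 2(1-Φ(√l₁))}`) if and only if
`1/2 + ε/(1-ε) ≥ 2Φ(√l₁)-1 ≥ 2Φ(√l_p)-1 ≥ 1/2 - ε/(1-ε)`; consequently such matrices
satisfy `l₁ ≤ [Φ⁻¹((3-ε)/(4(1-ε)))]²` and `l_p ≥ [Φ⁻¹((3-5ε)/(4(1-ε)))]²`. -/
theorem depth_region_characterization (ε l₁ lp : ℝ)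
    (hε0 : 0 ≤ ε) (hε : ε < 1 / 3) (hlp : 0 < lp) (hle : lp ≤ l₁) :
    ((min (2 * Phi (Real.sqrt lp) - 1) (2 * (1 - Phi (Real.sqrt l₁))) ≥
        1 / 2 - ε / (1 - ε)) ↔
      (1 / 2 + ε / (1 - ε) ≥ 2 * Phi (Real.sqrt l₁) - 1 ∧
        2 * Phi (Real.sqrt l₁) - 1 ≥ 2 * Phi (Real.sqrt lp) - 1 ∧
        2 * Phi (Real.sqrt lp) - 1 ≥ 1 / 2 - ε / (1 - ε))) ∧
    ((min (2 * Phi (Real.sqrt lp) - 1) (2 * (1 - Phi (Real.sqrt l₁))) ≥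
        1 / 2 - ε / (1 - ε)) →
      l₁ ≤ (PhiInv ((3 - ε) / (4 * (1 - ε)))) ^ 2 ∧
        (PhiInv ((3 - 5 * ε) / (4 * (1 - ε)))) ^ 2 ≤ lp) :=
  depth_region_characterization_general ε l₁ lp hε hle
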